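/- arXiv:2509.14300 — 3 statements merged into one kernel-verified Lean document; each statement's English description precedes it below -/
import Mathlib

section
/- For every path graph P_n with n ≥ 2 vertices, a two-element set {v1, v2} is a fault-tolerant resolving set of P_n if and only if both v1 and v2 are leaves (endpoints) of the path. -/
/-!
The distance in `P_n` is `d(i, j) = |i - j|`. Hence a single vertex resolves `P_n` iff it is an
endpoint: distances to an endpoint are injective, while an inner vertex is at distance 1 from both
of its neighbours. Finally `{v1, v2}` is fault-tolerant resolving iff both `{v1}` and `{v2}`
resolve, and the endpoints of `P_n`, `n ≥ 2`, are exactly its leaves.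
-/

open SimpleGraph

/-- `X` is a resolving set of `G`: every pair of distinct vertices is
distinguished by the distance to some vertex of `X`. -/
def isResolving {V : Type*} (G : SimpleGraph V) (X : Set V) : Prop :=
  ∀ u v : V, u ≠ v → ∃ x ∈ X, G.dist u x ≠ G.dist v x

/-- `X` is a fault-tolerant resolving set of `G`. -/
def isFTResolving {V : Type*} (G : SimpleGraph V) (X : Set V) : Prop :=
  ∀ s ∈ X, isResolving G (X \ {s})

/-- The fault-tolerant metric dimension of `G`. -/
noncomputable def fdim {V : Type*} (G : SimpleGraph V) : ℕ :=
  sInf {n | ∃ X : Set V, isFTResolving G X ∧ X.ncard = n}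

section PathGraph

variable {n : ℕ}

lemma pathGraph_natAbs_sub_le_length {u v : Fin n} (p : (pathGraph n).Walk u v) :
    ((u : ℤ) - v).natAbs ≤ p.length := by
  induction p with
  | nil => simp
  | cons h _ ih =>
    rw [pathGraph_adj] at h
    rw [Walk.length_cons]
    omega

lemma pathGraph_dist_le_sub {u v : Fin n} (huv : u ≤ v) :
    (pathGraph n).dist u v ≤ v - u := by
  obtain ⟨k, hk⟩ := Nat.exists_eq_add_of_le (Fin.le_def.mp huv)
  induction k generalizing v with
  | zero => simp [Fin.ext (hk.trans u.val.add_zero)]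
  | succ k ih =>
    let w : Fin n := ⟨u + k, by omega⟩
    have hwv : (pathGraph n).Adj w v := pathGraph_adj.mpr (Or.inl (by dsimp only [w]; omega))
    calc (pathGraph n).dist u v
        ≤ (pathGraph n).dist u w + (pathGraph n).dist w v :=
          (pathGraph_preconnected n w v).dist_triangle_right u
      _ ≤ (w - u) + 1 := by
          rw [dist_eq_one_iff_adj.mpr hwv]
          exact Nat.add_le_add_right (ih (Fin.le_def.mpr (by dsimp only [w]; omega)) rfl) 1
      _ = v - u := by dsimp only [w]; omega

theorem pathGraph_dist (u v : Fin n) :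
    (pathGraph n).dist u v = ((u : ℤ) - v).natAbs := by
  obtain ⟨p, hp⟩ := (pathGraph_preconnected n u v).exists_walk_length_eq_dist
  refine le_antisymm ?_ (hp ▸ pathGraph_natAbs_sub_le_length p)
  rcases le_total u v with huv | hvu
  · have := pathGraph_dist_le_sub huv
    omega
  · have := pathGraph_dist_le_sub hvu
    rw [dist_comm]
    omega

theorem pathGraph_isResolving_singleton_iff (x : Fin n) :
    isResolving (pathGraph n) {x} ↔ x.val = 0 ∨ x.val = n - 1 := by
  simp only [isResolving, Set.mem_singleton_iff, exists_eq_left, pathGraph_dist]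
  constructor
  · intro hres
    by_contra! hx
    have := hres ⟨x - 1, by omega⟩ ⟨x + 1, by omega⟩ (by simp [Fin.ext_iff])
    dsimp only at this
    omega
  · intro hx u v huv
    have := Fin.val_ne_of_ne huv
    omega

theorem pathGraph_neighborSet_ncard_eq_one_iff (hn : 2 ≤ n) (v : Fin n) :
    ((pathGraph n).neighborSet v).ncard = 1 ↔ v.val = 0 ∨ v.val = n - 1 := by
  rw [Set.ncard_eq_one]
  constructor
  · rintro ⟨a, ha⟩
    by_contra! hv
    have mem (w : Fin n) (h : v.val + 1 = w.val ∨ w.val + 1 = v.val) : w = a := by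
      rw [← Set.mem_singleton_iff, ← ha, mem_neighborSet, pathGraph_adj]
      exact h
    have := congrArg Fin.val <|
      (mem ⟨v - 1, by omega⟩ (by dsimp only; omega)).trans (mem ⟨v + 1, by omega⟩ (by dsimp only; omega)).symm
    simp at this
  · rintro (hv | hv)
    · refine ⟨⟨1, hn⟩, Set.ext fun w => ?_⟩
      rw [mem_neighborSet, pathGraph_adj, Set.mem_singleton_iff, Fin.ext_iff]
      dsimp only
      omega
    · refine ⟨⟨n - 2, by omega⟩, Set.ext fun w => ?_⟩
      rw [mem_neighborSet, pathGraph_adj, Set.mem_singleton_iff, Fin.ext_iff]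
      dsimp only
      omega

end PathGraph

theorem isFTResolving_pair_iff {V : Type*} (G : SimpleGraph V) {a b : V} (hab : a ≠ b) :
    isFTResolving G {a, b} ↔ isResolving G {a} ∧ isResolving G {b} := by
  simp only [isFTResolving, Set.forall_mem_insert, Set.mem_singleton_iff, forall_eq,
    Set.pair_sdiff_left hab, Set.pair_sdiff_right hab]
  exact and_comm

/-- For `P_n` with `n ≥ 2`, a two-element set `{v1, v2}` is a fault-tolerant
resolving set iff both `v1` and `v2` are leaves (vertices of degree 1). -/
theorem ftResolving_pathGraph_pair_iff (n : ℕ) (hn : 2 ≤ n) (v1 v2 : Fin n)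
    (hne : v1 ≠ v2) :
    isFTResolving (SimpleGraph.pathGraph n) {v1, v2} ↔
      ((SimpleGraph.pathGraph n).neighborSet v1).ncard = 1 ∧
      ((SimpleGraph.pathGraph n).neighborSet v2).ncard = 1 := by
  rw [isFTResolving_pair_iff _ hne, pathGraph_isResolving_singleton_iff,
    pathGraph_isResolving_singleton_iff, pathGraph_neighborSet_ncard_eq_one_iff hn,
    pathGraph_neighborSet_ncard_eq_one_iff hn]
end

section
/- For the complete graph K_n with attachment set At(K_n) ⊆ V(K_n): if |At(K_n)| < n − 1 then fdim*(K_n) = n − |At(K_n)|, and if |At(K_n)| ≥ n − 1 then fdim*(K_n) = 0. -/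
open SimpleGraph

/-- The attaching fault-tolerant metric dimension of `G` with respect to the
attachment set `At`. -/
noncomputable def fdimStar {V : Type*} (G : SimpleGraph V) (At : Set V) : ℕ :=
  sInf {n | ∃ F : Set V, F ⊆ Atᶜ ∧ isResolving G (F ∪ At) ∧
    (∀ x ∈ F, isResolving G ((F ∪ At) \ {x})) ∧ F.ncard = n}

/-!
In `K_n` a vertex `x` distinguishes `u ≠ v` exactly when `x ∈ {u, v}`, so `X` resolves `K_n`
iff it misses at most one vertex. If `Atᶜ` has at least two vertices, `F = ∅` fails, and for
`x ∈ F` the set `(F ∪ At) \ {x}` already misses `x`, so `F ∪ At` must be everything: `F = Atᶜ`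
is then the only admissible set. If `Atᶜ` has at most one vertex, `F = ∅` is admissible.
-/

variable {V : Type*}

theorem isResolving_top_iff (X : Set V) :
    isResolving (⊤ : SimpleGraph V) X ↔ Xᶜ.Subsingleton := by
  constructor
  · intro h u hu v hv
    by_contra huv
    obtain ⟨x, hx, hdist⟩ := h u v huv
    have hux : u ≠ x := fun e => hu (e ▸ hx)
    have hvx : v ≠ x := fun e => hv (e ▸ hx)
    exact hdist (by rw [dist_top_of_ne hux, dist_top_of_ne hvx])
  · intro h u v huv
    by_cases hu : u ∈ X
    · exact ⟨u, hu, by simp [dist_top_of_ne (Ne.symm huv)]⟩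
    · have hv : v ∈ X := by_contra fun hv => huv (h hu hv)
      exact ⟨v, hv, by simp [dist_top_of_ne huv]⟩

theorem forall_isResolving_top_diff_singleton_iff {F Y : Set V} (hFY : F ⊆ Y)
    (hF : F.Nonempty) :
    (∀ x ∈ F, isResolving (⊤ : SimpleGraph V) (Y \ {x})) ↔ Y = Set.univ := by
  simp only [isResolving_top_iff, Set.compl_sdiff]
  constructor
  · intro h
    obtain ⟨x, hx⟩ := hF
    refine Set.eq_univ_of_forall fun y => by_contra fun hy => ?_
    have hyx : y = x := h x hx (Or.inr hy) (Or.inl rfl)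
    exact hy (hyx ▸ hFY hx)
  · rintro rfl x -
    simp

theorem fdimStar_top_of_subsingleton {At : Set V} (h : Atᶜ.Subsingleton) :
    fdimStar (⊤ : SimpleGraph V) At = 0 :=
  Nat.sInf_eq_zero.mpr <| Or.inl
    ⟨∅, Set.empty_subset _, by simpa [isResolving_top_iff] using h, by simp, Set.ncard_empty _⟩

theorem isResolving_top_attaching_iff {F At : Set V} (h : Atᶜ.Nontrivial) (hF : F ⊆ Atᶜ) :
    (isResolving (⊤ : SimpleGraph V) (F ∪ At) ∧
      ∀ x ∈ F, isResolving (⊤ : SimpleGraph V) ((F ∪ At) \ {x})) ↔ F = Atᶜ := by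
  constructor
  · rintro ⟨hres, hft⟩
    have hFne : F.Nonempty := Set.nonempty_iff_ne_empty.mpr fun hempty => by
      rw [hempty, Set.empty_union, isResolving_top_iff] at hres
      exact h.not_subsingleton hres
    have huniv := (forall_isResolving_top_diff_singleton_iff Set.subset_union_left hFne).mp hft
    exact hF.antisymm (Set.compl_subset_iff_union.mpr (Set.union_comm At F ▸ huniv))
  · rintro rfl
    have huniv : Atᶜ ∪ At = Set.univ := Set.compl_union_self At
    refine ⟨by simp [huniv, isResolving_top_iff], ?_⟩
    exact (forall_isResolving_top_diff_singleton_iff Set.subset_union_left h.nonempty).mpr huniv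

theorem fdimStar_top_of_nontrivial {At : Set V} (h : Atᶜ.Nontrivial) :
    fdimStar (⊤ : SimpleGraph V) At = Atᶜ.ncard := by
  have hset : {n | ∃ F : Set V, F ⊆ Atᶜ ∧ isResolving ⊤ (F ∪ At) ∧
      (∀ x ∈ F, isResolving ⊤ ((F ∪ At) \ {x})) ∧ F.ncard = n} = {Atᶜ.ncard} := by
    ext n
    constructor
    · rintro ⟨F, hF, hres, hft, rfl⟩
      rw [(isResolving_top_attaching_iff h hF).mp ⟨hres, hft⟩, Set.mem_singleton_iff]
    · rintro rfl
      obtain ⟨hres, hft⟩ := (isResolving_top_attaching_iff h subset_rfl).mpr rfl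
      exact ⟨Atᶜ, subset_rfl, hres, hft, rfl⟩
  rw [fdimStar, hset, csInf_singleton]

/-- For the complete graph `K_n`: if `|At| < n - 1` then
`fdim*(K_n) = n - |At|`, and if `|At| ≥ n - 1` then `fdim*(K_n) = 0`. -/
theorem fdimStar_completeGraph (n : ℕ) (At : Set (Fin n)) :
    (At.ncard + 1 < n → fdimStar (⊤ : SimpleGraph (Fin n)) At = n - At.ncard) ∧
    (n ≤ At.ncard + 1 → fdimStar (⊤ : SimpleGraph (Fin n)) At = 0) := by
  have hcard : At.ncard + Atᶜ.ncard = n := by simpa using Set.ncard_add_ncard_compl At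
  constructor
  · intro h
    rw [fdimStar_top_of_nontrivial (Set.one_lt_ncard_iff_nontrivial.mp (by omega))]
    omega
  · intro h
    exact fdimStar_top_of_subsingleton (Set.ncard_le_one_iff_subsingleton.mp (by omega))
end

section
/- For the even cycle C_{2m} (m ≥ 2) with attachment set At(C_{2m}) consisting of exactly two antipodal vertices, the attaching fault-tolerant metric dimension satisfies fdim*(C_{2m}) = 2. -/
open SimpleGraph

open Fin.CommRing Fin.NatCast

section Aux

variable {n : ℕ}

private lemma val_zero_imp {k : ℕ} [NeZero k] {x : Fin k} (h : x.val = 0) : x = 0 :=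
  Fin.ext (by simp [h])

private lemma sub_val_add (hn : 2 ≤ n) {u v : Fin n} (h : u ≠ v) :
    (v - u).val + (u - v).val = n := by
  have h1 := Fin.coe_int_sub_eq_ite v u
  have h2 := Fin.coe_int_sub_eq_ite u v
  have h3 : u.val ≠ v.val := fun he => h (Fin.ext he)
  simp only [Fin.le_def] at h1 h2
  split_ifs at h1 h2 <;> omega

private lemma walk_exists [NeZero n] (hn : 2 ≤ n) (u : Fin n) (k : ℕ) :
    ∃ w : (cycleGraph n).Walk u (u + (k : Fin n)), w.length = k := by
  induction k with
  | zero => exact ⟨(Walk.nil).copy rfl (by simp), by simp⟩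
  | succ k ih =>
      obtain ⟨w, hw⟩ := ih
      have hadj : (cycleGraph n).Adj (u + (k : Fin n)) (u + ((k + 1 : ℕ) : Fin n)) := by
        rw [cycleGraph_adj']
        right
        have he : (u + ((k + 1 : ℕ) : Fin n)) - (u + (k : Fin n)) = 1 := by
          push_cast
          ring
        rw [he, Fin.val_one']
        exact Nat.mod_eq_of_lt (by omega)
      exact ⟨w.concat hadj, by simp [hw]⟩

private lemma dist_le_min (hn : 2 ≤ n) (u v : Fin n) :
    (cycleGraph n).dist u v ≤ min (v - u).val (u - v).val := by
  haveI : NeZero n := ⟨by omega⟩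
  have hn' := hn
  have h1 : (cycleGraph n).dist u v ≤ (v - u).val := by
    obtain ⟨w, hw⟩ := walk_exists hn u (v - u).val
    have he : u + (((v - u).val : ℕ) : Fin n) = v := by simp
    exact le_trans (SimpleGraph.dist_le (w.copy rfl he)) (by simpa using hw.le)
  have h2 : (cycleGraph n).dist u v ≤ (u - v).val := by
    obtain ⟨w, hw⟩ := walk_exists hn v (u - v).val
    have he : v + (((u - v).val : ℕ) : Fin n) = u := by simp
    rw [SimpleGraph.dist_comm]
    exact le_trans (SimpleGraph.dist_le (w.copy rfl he)) (by simpa using hw.le)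
  omega

private lemma walk_modeq (hn : 2 ≤ n) {u v : Fin n} (w : (cycleGraph n).Walk u v) :
    ∃ s : ℤ, s.natAbs ≤ w.length ∧ (v.val : ℤ) - u.val ≡ s [ZMOD (n : ℤ)] := by
  induction w with
  | nil => exact ⟨0, by simp, by simp⟩
  | @cons u x v h p ih =>
      obtain ⟨s, hs, hmod⟩ := ih
      rw [cycleGraph_adj'] at h
      rcases h with h | h
      · -- (u - x).val = 1, so x ≡ u - 1
        have h1 : (u.val : ℤ) - x.val ≡ 1 [ZMOD (n : ℤ)] := by
          show ((u.val : ℤ) - x.val) % n = 1 % n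
          rw [← Fin.coe_int_sub_eq_mod, h, Int.emod_eq_of_lt (by omega) (by omega)]
          simp
        refine ⟨s - 1, by simp [Walk.length_cons]; omega, ?_⟩
        have h2 : (x.val : ℤ) - u.val ≡ -1 [ZMOD (n : ℤ)] := by
          have h2' := h1.neg
          rw [neg_sub] at h2'
          exact h2'
        have h3 := hmod.add h2
        have he : (v.val : ℤ) - x.val + ((x.val : ℤ) - u.val) = (v.val : ℤ) - u.val := by ring
        rw [he] at h3
        rwa [← sub_eq_add_neg] at h3
      · -- (x - u).val = 1
        have h1 : (x.val : ℤ) - u.val ≡ 1 [ZMOD (n : ℤ)] := by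
          show ((x.val : ℤ) - u.val) % n = 1 % n
          rw [← Fin.coe_int_sub_eq_mod, h, Int.emod_eq_of_lt (by omega) (by omega)]
          simp
        refine ⟨s + 1, by simp [Walk.length_cons]; omega, ?_⟩
        have h3 := hmod.add h1
        have he : (v.val : ℤ) - x.val + ((x.val : ℤ) - u.val) = (v.val : ℤ) - u.val := by ring
        rw [he] at h3
        exact h3

private lemma min_le_dist (hn : 2 ≤ n) {u v : Fin n} (huv : u ≠ v) :
    min (v - u).val (u - v).val ≤ (cycleGraph n).dist u v := by
  haveI : NeZero n := ⟨by omega⟩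
  have hreach : (cycleGraph n).Reachable u v := by
    obtain ⟨w, -⟩ := walk_exists hn u (v - u).val
    exact ⟨w.copy rfl (by simp)⟩
  obtain ⟨w, hw⟩ := hreach.exists_walk_length_eq_dist
  obtain ⟨s, hs, hmod⟩ := walk_modeq hn w
  rw [hw] at hs
  by_contra hlt
  push_neg at hlt
  have hsum : (v - u).val + (u - v).val = n := sub_val_add hn huv
  have hv1 : (v - u).val ≠ 0 := by
    intro h0
    have h1 : v - u = 0 := val_zero_imp h0
    rw [sub_eq_zero] at h1
    exact huv h1.symm
  -- d1 ≡ s [ZMOD n]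
  have hd1 : ((v - u).val : ℤ) ≡ s [ZMOD (n : ℤ)] := by
    have h1 : ((v - u).val : ℤ) ≡ (v.val : ℤ) - u.val [ZMOD (n : ℤ)] := by
      show _ % _ = _ % _
      rw [Fin.coe_int_sub_eq_mod]
      exact Int.emod_emod_of_dvd _ dvd_rfl
    exact h1.trans hmod
  have hdvd : (n : ℤ) ∣ s - ((v - u).val : ℤ) := Int.ModEq.dvd hd1
  have h1 : s.natAbs < min (v - u).val (u - v).val := lt_of_le_of_lt hs hlt
  have hz : s - ((v - u).val : ℤ) = 0 := by
    apply Int.eq_zero_of_abs_lt_dvd hdvd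
    rw [abs_lt]
    constructor <;> omega
  omega

private lemma cycle_dist (hn : 2 ≤ n) (u v : Fin n) :
    (cycleGraph n).dist u v = min (v - u).val (u - v).val := by
  rcases eq_or_ne u v with rfl | huv
  · haveI : NeZero n := ⟨by omega⟩
    rw [sub_self, SimpleGraph.dist_self]
    simp
  · exact le_antisymm (dist_le_min hn u v) (min_le_dist hn huv)

private lemma dist_eq_cases (hn : 2 ≤ n) {u v x : Fin n}
    (h : (cycleGraph n).dist u x = (cycleGraph n).dist v x) : u = v ∨ u + v = x + x := by
  haveI : NeZero n := ⟨by omega⟩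
  rw [cycle_dist hn, cycle_dist hn] at h
  rcases eq_or_ne u x with he | hux
  · left
    subst he
    simp only [sub_self, Fin.val_zero, Nat.min_self] at h
    have h0 : (u - v).val = 0 ∨ (v - u).val = 0 := by omega
    rcases h0 with h0 | h0
    · have : u - v = 0 := val_zero_imp h0
      rwa [sub_eq_zero] at this
    · have : v - u = 0 := val_zero_imp h0
      rw [sub_eq_zero] at this
      exact this.symm
  rcases eq_or_ne v x with he | hvx
  · left
    subst he
    simp only [sub_self, Fin.val_zero, Nat.min_self] at h
    have h0 : (v - u).val = 0 ∨ (u - v).val = 0 := by omega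
    rcases h0 with h0 | h0
    · have : v - u = 0 := val_zero_imp h0
      rw [sub_eq_zero] at this
      exact this.symm
    · have : u - v = 0 := val_zero_imp h0
      rwa [sub_eq_zero] at this
  have h1 := sub_val_add hn hux
  have h2 := sub_val_add hn hvx
  have hZ1 : (x - u).val ≠ 0 := fun h0 => hux (sub_eq_zero.mp (val_zero_imp h0)).symm
  have hZ2 : (x - v).val ≠ 0 := fun h0 => hvx (sub_eq_zero.mp (val_zero_imp h0)).symm
  have hcase : (x - u).val = (x - v).val ∨ (x - u).val = (v - x).val := by omega
  rcases hcase with hc | hc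
  · left
    have heq : x - u = x - v := Fin.ext hc
    exact sub_right_inj.mp heq
  · right
    have heq : x - u = v - x := Fin.ext hc
    linear_combination -heq

private lemma dist_eq_of_add (hn : 2 ≤ n) {u v x : Fin n} (h : u + v = x + x) :
    (cycleGraph n).dist u x = (cycleGraph n).dist v x := by
  haveI : NeZero n := ⟨by omega⟩
  rw [cycle_dist hn, cycle_dist hn]
  have e1 : x - u = v - x := by linear_combination -h
  have e2 : u - x = x - v := by linear_combination h
  rw [e1, e2, Nat.min_comm]

private lemma res_mono {V : Type*} (G : SimpleGraph V) {X Y : Set V} (h : X ⊆ Y)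
    (hr : isResolving G X) : isResolving G Y := fun u v huv =>
  let ⟨x, hx, hd⟩ := hr u v huv; ⟨x, h hx, hd⟩

end Aux

section Cycle

variable {m : ℕ}

private lemma antipodal_add (hm : 2 ≤ m) {a b : Fin (2 * m)} (hbv : (b - a).val = m) :
    b + b = a + a := by
  haveI : NeZero (2 * m) := ⟨by omega⟩
  have h := Fin.coe_int_add_eq_ite (b - a) (b - a)
  rw [hbv] at h
  have h0 : ((b - a) + (b - a)).val = 0 := by split_ifs at h <;> omega
  have h1 : (b - a) + (b - a) = 0 := val_zero_imp h0
  linear_combination h1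

private lemma resolving_three (hm : 2 ≤ m) (a b c : Fin (2 * m))
    (hbv : (b - a).val = m) (hca : c ≠ a) (hcb : c ≠ b) :
    isResolving (cycleGraph (2 * m)) {a, b, c} := by
  haveI : NeZero (2 * m) := ⟨by omega⟩
  have hn : 2 ≤ 2 * m := by omega
  intro u v huv
  by_contra hcon
  push_neg at hcon
  have ha := hcon a (by simp)
  have hc := hcon c (by simp)
  rcases dist_eq_cases hn ha with he | h1
  · exact huv he
  rcases dist_eq_cases hn hc with he | h2
  · exact huv he
  have h4 : (c - a) + (c - a) = 0 := by linear_combination h1 - h2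
  have h5 := Fin.coe_int_add_eq_ite (c - a) (c - a)
  rw [h4] at h5
  simp only [Fin.val_zero, Nat.cast_zero, Int.ofNat_zero] at h5
  have hlt := (c - a).isLt
  have hd : (c - a).val = 0 ∨ (c - a).val = m := by
    split_ifs at h5 <;> omega
  rcases hd with hd | hd
  · exact hca (sub_eq_zero.mp (val_zero_imp hd))
  · apply hcb
    have heq : c - a = b - a := Fin.ext (by rw [hd, hbv])
    linear_combination heq

private lemma not_res_pair (hm : 2 ≤ m) {a b : Fin (2 * m)} (hbv : (b - a).val = m) :
    ¬ isResolving (cycleGraph (2 * m)) {a, b} := by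
  haveI : NeZero (2 * m) := ⟨by omega⟩
  have hn : 2 ≤ 2 * m := by omega
  intro h
  have hv1 : (1 : Fin (2 * m)).val = 1 := by
    rw [Fin.val_one']
    exact Nat.mod_eq_of_lt (by omega)
  have hne : a + 1 ≠ a - 1 := by
    intro he
    have h11 : (1 : Fin (2 * m)) + 1 = 0 := by linear_combination he
    have h12 := Fin.coe_int_add_eq_ite (1 : Fin (2 * m)) (1 : Fin (2 * m))
    rw [h11, hv1] at h12
    simp only [Fin.val_zero, Nat.cast_zero, Int.ofNat_zero] at h12
    split_ifs at h12 <;> omega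
  obtain ⟨x, hx, hne'⟩ := h (a + 1) (a - 1) hne
  have hba := antipodal_add hm hbv
  rcases hx with rfl | rfl
  · exact hne' (dist_eq_of_add hn (by ring))
  · exact hne' (dist_eq_of_add hn (by linear_combination -hba))

end Cycle

/-- For the even cycle `C_{2m}` (`m ≥ 2`) whose attachment set consists of two
antipodal vertices, `fdim*(C_{2m}) = 2`. -/
theorem fdimStar_evenCycle (m : ℕ) (hm : 2 ≤ m) (a b : Fin (2 * m))
    (hab : (SimpleGraph.cycleGraph (2 * m)).dist a b = m) :
    fdimStar (SimpleGraph.cycleGraph (2 * m)) {a, b} = 2 := by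
  haveI : NeZero (2 * m) := ⟨by omega⟩
  have hn : 2 ≤ 2 * m := by omega
  have hne : a ≠ b := by
    intro h
    rw [h, SimpleGraph.dist_self] at hab
    omega
  have hsum : (b - a).val + (a - b).val = 2 * m := sub_val_add hn hne
  rw [cycle_dist hn] at hab
  have hbv : (b - a).val = m := by omega
  have hav : (a - b).val = m := by omega
  have hv1 : (1 : Fin (2 * m)).val = 1 := by
    rw [Fin.val_one']
    exact Nat.mod_eq_of_lt (by omega)
  have hneq : ∀ {x y : Fin (2 * m)}, (y - x).val ≠ 0 → y ≠ x := by
    intro x y h hxy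
    subst hxy
    simp [sub_self] at h
  have haddval : ∀ x y : Fin (2 * m), x.val + y.val < 2 * m → (x + y).val = x.val + y.val := by
    intro x y h
    have h2 := Fin.coe_int_add_eq_ite x y
    rw [if_pos h] at h2
    omega
  have n1 : a + 1 ≠ a := by
    apply hneq
    have e : (a + 1) - a = 1 := by ring
    rw [e, hv1]
    omega
  have n2 : a + 1 ≠ b := by
    apply hneq
    have e : (a + 1) - b = (a - b) + 1 := by ring
    have e2 : ((a - b) + 1).val = m + 1 := by
      rw [haddval _ _ (by rw [hav, hv1]; omega), hav, hv1]
    rw [e, e2]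
    omega
  have n3 : b + 1 ≠ a := by
    apply hneq
    have e : (b + 1) - a = (b - a) + 1 := by ring
    have e2 : ((b - a) + 1).val = m + 1 := by
      rw [haddval _ _ (by rw [hbv, hv1]; omega), hbv, hv1]
    rw [e, e2]
    omega
  have n4 : b + 1 ≠ b := by
    apply hneq
    have e : (b + 1) - b = 1 := by ring
    rw [e, hv1]
    omega
  have n5 : a + 1 ≠ b + 1 := by
    intro h
    exact hne (add_right_cancel h)
  have hmem2 : 2 ∈ {k | ∃ F : Set (Fin (2 * m)), F ⊆ ({a, b} : Set (Fin (2 * m)))ᶜ ∧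
      isResolving (cycleGraph (2 * m)) (F ∪ {a, b}) ∧
      (∀ x ∈ F, isResolving (cycleGraph (2 * m)) ((F ∪ {a, b}) \ {x})) ∧ F.ncard = k} := by
    refine ⟨{a + 1, b + 1}, ?_, ?_, ?_, Set.ncard_pair n5⟩
    · intro x hx
      simp only [Set.mem_insert_iff, Set.mem_singleton_iff] at hx
      simp only [Set.mem_compl_iff, Set.mem_insert_iff, Set.mem_singleton_iff, not_or]
      rcases hx with rfl | rfl
      · exact ⟨n1, n2⟩
      · exact ⟨n3, n4⟩
    · apply res_mono _ _ (resolving_three hm a b (a + 1) hbv n1 n2)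
      intro y hy
      simp only [Set.mem_insert_iff, Set.mem_singleton_iff] at hy
      simp only [Set.mem_union, Set.mem_insert_iff, Set.mem_singleton_iff]
      tauto
    · intro x hx
      simp only [Set.mem_insert_iff, Set.mem_singleton_iff] at hx
      rcases hx with rfl | rfl
      · apply res_mono _ _ (resolving_three hm a b (b + 1) hbv n3 n4)
        intro y hy
        simp only [Set.mem_insert_iff, Set.mem_singleton_iff] at hy
        simp only [Set.mem_diff, Set.mem_union, Set.mem_insert_iff, Set.mem_singleton_iff]
        rcases hy with rfl | rfl | rfl
        · exact ⟨by tauto, Ne.symm n1⟩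
        · exact ⟨by tauto, Ne.symm n2⟩
        · exact ⟨by tauto, Ne.symm n5⟩
      · apply res_mono _ _ (resolving_three hm a b (a + 1) hbv n1 n2)
        intro y hy
        simp only [Set.mem_insert_iff, Set.mem_singleton_iff] at hy
        simp only [Set.mem_diff, Set.mem_union, Set.mem_insert_iff, Set.mem_singleton_iff]
        rcases hy with rfl | rfl | rfl
        · exact ⟨by tauto, Ne.symm n3⟩
        · exact ⟨by tauto, Ne.symm n4⟩
        · exact ⟨by tauto, n5⟩
  unfold fdimStar
  apply le_antisymm
  · exact Nat.sInf_le hmem2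
  · refine le_csInf ⟨2, hmem2⟩ ?_
    rintro k ⟨F, hFsub, hres, hft, rfl⟩
    by_contra hk
    push_neg at hk
    rcases (by omega : F.ncard = 0 ∨ F.ncard = 1) with h0 | h1
    · rw [Set.ncard_eq_zero (Set.toFinite F)] at h0
      subst h0
      rw [Set.empty_union] at hres
      exact not_res_pair hm hbv hres
    · obtain ⟨c, rfl⟩ := Set.ncard_eq_one.mp h1
      have hc := hFsub (Set.mem_singleton c)
      simp only [Set.mem_compl_iff, Set.mem_insert_iff, Set.mem_singleton_iff, not_or] at hc
      have h := hft c (Set.mem_singleton c)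
      have he : (({c} : Set (Fin (2 * m))) ∪ {a, b}) \ {c} = {a, b} := by
        ext y
        simp only [Set.mem_diff, Set.mem_union, Set.mem_insert_iff, Set.mem_singleton_iff]
        constructor
        · rintro ⟨h1 | h1, h2⟩ <;> tauto
        · intro hy
          rcases hy with rfl | rfl
          · exact ⟨Or.inr (Or.inl rfl), fun hh => hc.1 hh.symm⟩
          · exact ⟨Or.inr (Or.inr rfl), fun hh => hc.2 hh.symm⟩
      rw [he] at h
      exact not_res_pair hm hbv h
end
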